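/- The Senn design is MV-optimal among standard dose-escalation designs for comparing drug doses with the placebo: for every standard dose-escalation design ξ (t = n) with N_A(ξ) invertible, max_{1 ≤ i ≤ n} (N_A(ξ)^{-1})_{ii} ≥ 4n, while the Senn design ξ_S satisfies N_A(ξ_S)^{-1} = 4n·I_n, so that max_{1 ≤ i ≤ n} (N_A(ξ_S)^{-1})_{ii} = 4n. Hence the Senn design minimizes the maximum of the variances of the least-squares estimators of τ_1 − τ_0, …, τ_n − τ_0. -/

import Mathlib

/-!
For every dose-escalation design, Cauchy–Schwarz within each cohort shows that `N_A(ξ)` is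
positive semidefinite, and for an invertible positive semidefinite matrix `(A⁻¹)ᵢᵢ ≥ 1 / Aᵢᵢ`.
When `t = n` the highest dose can only be given in the last cohort, say with weight `c`, so its
diagonal entry of `N_A(ξ)` is `c - n c² ≤ 1 / (4n)`, whence `(N_A(ξ)⁻¹)ₙₙ ≥ 4n`. The Senn design
has `N_A = I / (4n)`.
-/

noncomputable section

open Matrix Finset

/-- An approximate design on treatments 0,…,n and cohorts 1,…,t:
nonnegative weights summing to 1. -/
def isDesign (n t : ℕ) (ξ : Fin (n+1) → Fin t → ℝ) : Prop :=
  (∀ i k, 0 ≤ ξ i k) ∧ ∑ i, ∑ k, ξ i k = 1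

/-- A dose-escalation design: (i) in cohort k ≤ n only treatments 0,…,k are
allowed (cohort `k : Fin t` has cohort number k+1, treatment `i : Fin (n+1)`
has treatment number i); (ii) each cohort has proportion 1/t. -/
def isEscalation (n t : ℕ) (ξ : Fin (n+1) → Fin t → ℝ) : Prop :=
  isDesign n t ξ ∧
  (∀ (i : Fin (n+1)) (k : Fin t), k.val + 1 ≤ n → k.val + 1 < i.val → ξ i k = 0) ∧
  (∀ k : Fin t, ∑ i, ξ i k = 1 / t)

/-- Treatment proportions r_i(ξ). -/
def repl (n t : ℕ) (ξ : Fin (n+1) → Fin t → ℝ) (i : Fin (n+1)) : ℝ := ∑ k, ξ i k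

/-- The information matrix N_A(ξ) = diag(r_1,…,r_n) − t·Z Z^T for comparing
the doses with the placebo. -/
def NA (n t : ℕ) (ξ : Fin (n+1) → Fin t → ℝ) : Matrix (Fin n) (Fin n) ℝ :=
  fun i j => (if i = j then repl n t ξ i.succ else 0) -
    (t : ℝ) * ∑ k, ξ i.succ k * ξ j.succ k

/-- Smallest eigenvalue of a real symmetric matrix, via the Rayleigh quotient. -/
def lambdaMin {m : ℕ} (A : Matrix (Fin m) (Fin m) ℝ) : ℝ :=
  sInf { r : ℝ | ∃ x : Fin m → ℝ, ∑ i, x i ^ 2 = 1 ∧ r = ∑ i, ∑ j, x i * A i j * x j }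

/-- The Senn design (t = n): in each cohort half the weight on placebo and half
on the highest allowed dose. -/
def senn (n : ℕ) : Fin (n+1) → Fin n → ℝ :=
  fun i k => if i.val = 0 ∨ i.val = k.val + 1 then 1 / (2 * n) else 0

theorem Matrix.PosSemidef.one_le_diag_mul_inv_diag {ι : Type*} [Fintype ι] [DecidableEq ι]
    {A : Matrix ι ι ℝ} (hA : A.PosSemidef) (hdet : IsUnit A.det) (i : ι) :
    1 ≤ A i i * A⁻¹ i i := by
  set e : ι → ℝ := Pi.single i 1
  set v := A⁻¹ *ᵥ e
  have hAv : A *ᵥ v = e := by rw [mulVec_mulVec, mul_nonsing_inv _ hdet, one_mulVec]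
  have hvA : v ᵥ* A = e := by
    rw [← mulVec_transpose, ← conjTranspose_eq_transpose_of_trivial, hA.isHermitian.eq, hAv]
  have hee : e ⬝ᵥ e = 1 := by simp [e]
  have heAe : e ⬝ᵥ A *ᵥ e = A i i := by simp [e, mulVec_single]
  have hvAe : v ⬝ᵥ A *ᵥ e = 1 := by rw [dotProduct_mulVec, hvA, hee]
  have hve : v ⬝ᵥ e = A⁻¹ i i := by simp [v, e, mulVec_single]
  have hquad : ∀ s : ℝ, 0 ≤ A⁻¹ i i * (s * s) + 2 * s + A i i := by
    intro s
    have h := hA.dotProduct_mulVec_nonneg (e + s • v)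
    simp only [star_trivial, mulVec_add, mulVec_smul, hAv, add_dotProduct, dotProduct_add,
      smul_dotProduct, dotProduct_smul, smul_eq_mul, hee, heAe, hvAe, hve] at h
    linarith
  -- `s ↦ (e + s • v) ⬝ᵥ A *ᵥ (e + s • v)` is a nonnegative quadratic, so its discriminant is `≤ 0`
  have := discrim_le_zero hquad
  rw [discrim] at this
  linarith

theorem Matrix.PosSemidef.le_inv_diag_of_diag_le_inv {ι : Type*} [Fintype ι] [DecidableEq ι]
    {A : Matrix ι ι ℝ} (hA : A.PosSemidef) (hdet : IsUnit A.det) (i : ι) {c : ℝ} (hc : 0 < c)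
    (hdiag : A i i ≤ c⁻¹) : c ≤ A⁻¹ i i := by
  have hprod := hA.one_le_diag_mul_inv_diag hdet i
  have hinv_pos : 0 < A⁻¹ i i := pos_of_mul_pos_right (one_pos.trans_le hprod) hA.diag_nonneg
  calc c ≤ c * (A i i * A⁻¹ i i) := le_mul_of_one_le_right hc.le hprod
    _ ≤ c * (c⁻¹ * A⁻¹ i i) := by gcongr
    _ = A⁻¹ i i := by field_simp

theorem mul_sq_sum_mul_le {ι : Type*} (s : Finset ι) {w x : ι → ℝ} {c : ℝ} (hc : 0 ≤ c)
    (hw : ∀ i ∈ s, 0 ≤ w i) (hcw : c * ∑ i ∈ s, w i ≤ 1) :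
    c * (∑ i ∈ s, x i * w i) ^ 2 ≤ ∑ i ∈ s, x i ^ 2 * w i := by
  have hq : 0 ≤ ∑ i ∈ s, x i ^ 2 * w i :=
    sum_nonneg fun i hi => mul_nonneg (sq_nonneg _) (hw i hi)
  calc c * (∑ i ∈ s, x i * w i) ^ 2
      ≤ c * ((∑ i ∈ s, x i ^ 2 * w i) * ∑ i ∈ s, w i) := by
        gcongr
        exact sum_sq_le_sum_mul_sum_of_sq_le_mul s (fun i hi => mul_nonneg (sq_nonneg _) (hw i hi))
          hw fun i _ => le_of_eq (by ring)
    _ = (∑ i ∈ s, x i ^ 2 * w i) * (c * ∑ i ∈ s, w i) := by ring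
    _ ≤ ∑ i ∈ s, x i ^ 2 * w i := mul_le_of_le_one_right hq hcw

theorem NA_isSymm (n t : ℕ) (ξ : Fin (n+1) → Fin t → ℝ) : (NA n t ξ).IsSymm := by
  ext i j
  simp only [transpose_apply, NA, mul_comm (ξ j.succ _)]
  rcases eq_or_ne i j with rfl | h
  · rfl
  · simp [h, h.symm]

theorem dotProduct_NA_mulVec (n t : ℕ) (ξ : Fin (n+1) → Fin t → ℝ) (x : Fin n → ℝ) :
    x ⬝ᵥ NA n t ξ *ᵥ x =
      ∑ k, (∑ i, x i ^ 2 * ξ i.succ k - t * (∑ i, x i * ξ i.succ k) ^ 2) := by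
  simp only [dotProduct, mulVec, NA, repl, sub_mul, ite_mul, zero_mul, sum_sub_distrib, mul_sub,
    sum_ite_eq, mem_univ, if_true, sq, mul_sum, sum_mul]
  congr 1
  · rw [sum_comm]; exact sum_congr rfl fun _ _ => sum_congr rfl fun _ _ => by ring
  · rw [sum_comm, sum_congr rfl fun _ _ => sum_comm, sum_comm]
    exact sum_congr rfl fun _ _ => sum_congr rfl fun _ _ => sum_congr rfl fun _ _ => by ring

theorem NA_posSemidef {n t : ℕ} {ξ : Fin (n+1) → Fin t → ℝ} (hnonneg : ∀ i k, 0 ≤ ξ i k)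
    (hcohort : ∀ k, ∑ i, ξ i k = 1 / t) : (NA n t ξ).PosSemidef := by
  refine .of_dotProduct_mulVec_nonneg (isHermitian_iff_isSymm.mpr (NA_isSymm n t ξ)) fun x => ?_
  rw [star_trivial, dotProduct_NA_mulVec]
  refine sum_nonneg fun k _ => sub_nonneg.mpr (mul_sq_sum_mul_le _ t.cast_nonneg
    (fun i _ => hnonneg _ _) ?_)
  have hdoses := hcohort k
  rw [Fin.sum_univ_succ] at hdoses
  calc (t : ℝ) * ∑ i : Fin n, ξ i.succ k
      ≤ t * (1 / t) := by gcongr; linarith [hnonneg 0 k]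
    _ ≤ 1 := by rw [mul_one_div]; exact div_self_le_one _

theorem NA_diag_le_of_single_cohort {n t : ℕ} {ξ : Fin (n+1) → Fin t → ℝ} (ht : 0 < t)
    (i : Fin n) (k₀ : Fin t) (hsupp : ∀ k ≠ k₀, ξ i.succ k = 0) :
    NA n t ξ i i ≤ (4 * (t : ℝ))⁻¹ := by
  have hrepl : repl n t ξ i.succ = ξ i.succ k₀ :=
    sum_eq_single k₀ (fun k _ hk => hsupp k hk) (by simp)
  have hsq : ∑ k, ξ i.succ k * ξ i.succ k = ξ i.succ k₀ * ξ i.succ k₀ :=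
    sum_eq_single k₀ (fun k _ hk => by rw [hsupp k hk, zero_mul]) (by simp)
  have ht' : (0 : ℝ) < t := by exact_mod_cast ht
  simp only [NA, if_true, hrepl, hsq]
  rw [← one_div, le_div_iff₀ (by positivity)]
  nlinarith [sq_nonneg (2 * t * ξ i.succ k₀ - 1)]

theorem isEscalation.last_dose_eq_zero {m : ℕ} {ξ : Fin (m+2) → Fin (m+1) → ℝ}
    (hξ : isEscalation (m+1) (m+1) ξ) (k : Fin (m+1)) (hk : k ≠ Fin.last m) :
    ξ (Fin.last (m+1)) k = 0 :=
  hξ.2.1 _ k (by omega) (by rw [Fin.val_last]; exact Nat.succ_lt_succ (Fin.val_lt_last hk))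

theorem NA_senn (n : ℕ) : NA n n (senn n) = (4 * (n : ℝ))⁻¹ • (1 : Matrix (Fin n) (Fin n) ℝ) := by
  have hsenn : ∀ i k : Fin n, senn n i.succ k = if i = k then 1 / (2 * (n : ℝ)) else 0 := by
    intro i k
    simp only [senn, Fin.val_succ, Fin.ext_iff]
    congr 1
    simp only [eq_iff_iff]
    omega
  ext i j
  rcases eq_or_ne i j with rfl | h
  · simp only [NA, if_true, repl, hsenn, sum_ite_eq, mem_univ, mul_ite, mul_zero, Matrix.smul_apply,
      one_apply_eq, smul_eq_mul, mul_one]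
    field_simp
    ring
  · simp [NA, hsenn, h]

theorem inv_NA_senn {n : ℕ} (hn : 0 < n) :
    (NA n n (senn n))⁻¹ = (4 * (n : ℝ)) • (1 : Matrix (Fin n) (Fin n) ℝ) := by
  have : (4 * (n : ℝ)) ≠ 0 := by positivity
  rw [NA_senn]
  refine inv_eq_left_inv ?_
  rw [smul_mul_smul_comm, mul_one, mul_inv_cancel₀ this, one_smul]

/-- Theorem 5 (MV-optimality of the Senn design, t = n): for every standard
dose-escalation design with invertible N_A, the maximum diagonal entry of
N_A(ξ)⁻¹ is at least 4n (i.e., some dose–placebo variance is ≥ 4n), while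
the Senn design satisfies N_A(ξ_S)⁻¹ = 4n·I, so all its dose–placebo
variances equal 4n; hence the Senn design minimizes the maximum variance of
the least-squares estimators of τ₁ − τ₀, …, τₙ − τ₀. -/
theorem stmt13 (n : ℕ) (hn : 2 ≤ n) :
    (∀ ξ : Fin (n+1) → Fin n → ℝ, isEscalation n n ξ → IsUnit (NA n n ξ).det →
      ∃ i : Fin n, 4 * (n : ℝ) ≤ (NA n n ξ)⁻¹ i i) ∧
    (NA n n (senn n))⁻¹ = (4 * (n : ℝ)) • (1 : Matrix (Fin n) (Fin n) ℝ) := by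
  obtain ⟨m, rfl⟩ : ∃ m, n = m + 1 := ⟨n - 1, by omega⟩
  refine ⟨fun ξ hξ hdet => ⟨Fin.last m, ?_⟩, inv_NA_senn m.succ_pos⟩
  refine (NA_posSemidef hξ.1.1 hξ.2.2).le_inv_diag_of_diag_le_inv hdet _ (by positivity) ?_
  refine NA_diag_le_of_single_cohort m.succ_pos _ (Fin.last m) fun k hk => ?_
  rw [Fin.succ_last]
  exact hξ.last_dose_eq_zero k hk
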